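/- The largest eigenvalue μ of the Laplacian matrix of the graph G strictly exceeds max over all vertices v of G of 2·m_v²/d_v. (This gives a counterexample to conjectured bound 2 of Brankov, Hansen and Stevanović.) -/

import Mathlib

open scoped Pointwise

set_option maxHeartbeats 1000000

/-- The edge list of the graph. -/
def edgeList : List (Fin 12 × Fin 12) :=
  [(0,3),(0,4),(0,8),(1,2),(1,3),(1,8),(1,10),(2,5),(2,7),(2,11),(3,7),(3,11),(4,6),(4,7),(5,8),(5,9),(6,9),(6,10),(7,10),(9,11),(10,11)]

/-- The graph under consideration. -/
def G : SimpleGraph (Fin 12) where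
  Adj v w := (v, w) ∈ edgeList ∨ (w, v) ∈ edgeList
  symm := ⟨fun _ _ h => h.symm⟩
  loopless := ⟨by intro v; fin_cases v <;> decide⟩

instance : DecidableRel G.Adj :=
  fun v w => inferInstanceAs (Decidable ((v, w) ∈ edgeList ∨ (w, v) ∈ edgeList))

/-- `d v` is the degree of the vertex `v`, as a real number. -/
noncomputable def d (v : Fin 12) : ℝ := G.degree v

/-- `m v` is the average of the degrees of the neighbours of `v`. -/
noncomputable def m (v : Fin 12) : ℝ :=
  (∑ u ∈ G.neighborFinset v, (G.degree u : ℝ)) / d v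

/-- rational test vector -/
def xv : Fin 12 → ℚ := ![2,5,-5,-5,-2,2,2,5,-2,-2,-5,5]

/-- real test vector -/
noncomputable def xr : Fin 12 → ℝ := fun v => (xv v : ℝ)

/-- the values of `L *ᵥ xr`, as rationals -/
def yv : Fin 12 → ℚ := ![15,37,-37,-37,-15,15,15,37,-15,-15,-37,37]

lemma lap_mulVec_xr : Matrix.mulVec (G.lapMatrix ℝ) xr = fun v => (yv v : ℝ) := by
  have h0 : Matrix.mulVec (G.lapMatrix ℝ) xr 0 = ((yv 0 : ℚ) : ℝ) := by
    rw [SimpleGraph.lapMatrix_mulVec_apply,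
      show G.neighborFinset 0 = ({3,4,8} : Finset (Fin 12)) from by decide,
      show G.degree 0 = 3 from by decide]
    simp [xr, Finset.sum_insert, Finset.mem_insert, Finset.sum_singleton, Finset.mem_singleton]
    norm_num [show xv 0 = 2 from by decide, show xv 1 = 5 from by decide, show xv 2 = -5 from by decide, show xv 3 = -5 from by decide, show xv 4 = -2 from by decide, show xv 5 = 2 from by decide, show xv 6 = 2 from by decide, show xv 7 = 5 from by decide, show xv 8 = -2 from by decide, show xv 9 = -2 from by decide, show xv 10 = -5 from by decide, show xv 11 = 5 from by decide, show yv 0 = 15 from by decide]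
  have h1 : Matrix.mulVec (G.lapMatrix ℝ) xr 1 = ((yv 1 : ℚ) : ℝ) := by
    rw [SimpleGraph.lapMatrix_mulVec_apply,
      show G.neighborFinset 1 = ({2,3,8,10} : Finset (Fin 12)) from by decide,
      show G.degree 1 = 4 from by decide]
    simp [xr, Finset.sum_insert, Finset.mem_insert, Finset.sum_singleton, Finset.mem_singleton]
    norm_num [show xv 0 = 2 from by decide, show xv 1 = 5 from by decide, show xv 2 = -5 from by decide, show xv 3 = -5 from by decide, show xv 4 = -2 from by decide, show xv 5 = 2 from by decide, show xv 6 = 2 from by decide, show xv 7 = 5 from by decide, show xv 8 = -2 from by decide, show xv 9 = -2 from by decide, show xv 10 = -5 from by decide, show xv 11 = 5 from by decide, show yv 1 = 37 from by decide]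
  have h2 : Matrix.mulVec (G.lapMatrix ℝ) xr 2 = ((yv 2 : ℚ) : ℝ) := by
    rw [SimpleGraph.lapMatrix_mulVec_apply,
      show G.neighborFinset 2 = ({1,5,7,11} : Finset (Fin 12)) from by decide,
      show G.degree 2 = 4 from by decide]
    simp [xr, Finset.sum_insert, Finset.mem_insert, Finset.sum_singleton, Finset.mem_singleton]
    norm_num [show xv 0 = 2 from by decide, show xv 1 = 5 from by decide, show xv 2 = -5 from by decide, show xv 3 = -5 from by decide, show xv 4 = -2 from by decide, show xv 5 = 2 from by decide, show xv 6 = 2 from by decide, show xv 7 = 5 from by decide, show xv 8 = -2 from by decide, show xv 9 = -2 from by decide, show xv 10 = -5 from by decide, show xv 11 = 5 from by decide, show yv 2 = -37 from by decide]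
  have h3 : Matrix.mulVec (G.lapMatrix ℝ) xr 3 = ((yv 3 : ℚ) : ℝ) := by
    rw [SimpleGraph.lapMatrix_mulVec_apply,
      show G.neighborFinset 3 = ({0,1,7,11} : Finset (Fin 12)) from by decide,
      show G.degree 3 = 4 from by decide]
    simp [xr, Finset.sum_insert, Finset.mem_insert, Finset.sum_singleton, Finset.mem_singleton]
    norm_num [show xv 0 = 2 from by decide, show xv 1 = 5 from by decide, show xv 2 = -5 from by decide, show xv 3 = -5 from by decide, show xv 4 = -2 from by decide, show xv 5 = 2 from by decide, show xv 6 = 2 from by decide, show xv 7 = 5 from by decide, show xv 8 = -2 from by decide, show xv 9 = -2 from by decide, show xv 10 = -5 from by decide, show xv 11 = 5 from by decide, show yv 3 = -37 from by decide]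
  have h4 : Matrix.mulVec (G.lapMatrix ℝ) xr 4 = ((yv 4 : ℚ) : ℝ) := by
    rw [SimpleGraph.lapMatrix_mulVec_apply,
      show G.neighborFinset 4 = ({0,6,7} : Finset (Fin 12)) from by decide,
      show G.degree 4 = 3 from by decide]
    simp [xr, Finset.sum_insert, Finset.mem_insert, Finset.sum_singleton, Finset.mem_singleton]
    norm_num [show xv 0 = 2 from by decide, show xv 1 = 5 from by decide, show xv 2 = -5 from by decide, show xv 3 = -5 from by decide, show xv 4 = -2 from by decide, show xv 5 = 2 from by decide, show xv 6 = 2 from by decide, show xv 7 = 5 from by decide, show xv 8 = -2 from by decide, show xv 9 = -2 from by decide, show xv 10 = -5 from by decide, show xv 11 = 5 from by decide, show yv 4 = -15 from by decide]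
  have h5 : Matrix.mulVec (G.lapMatrix ℝ) xr 5 = ((yv 5 : ℚ) : ℝ) := by
    rw [SimpleGraph.lapMatrix_mulVec_apply,
      show G.neighborFinset 5 = ({2,8,9} : Finset (Fin 12)) from by decide,
      show G.degree 5 = 3 from by decide]
    simp [xr, Finset.sum_insert, Finset.mem_insert, Finset.sum_singleton, Finset.mem_singleton]
    norm_num [show xv 0 = 2 from by decide, show xv 1 = 5 from by decide, show xv 2 = -5 from by decide, show xv 3 = -5 from by decide, show xv 4 = -2 from by decide, show xv 5 = 2 from by decide, show xv 6 = 2 from by decide, show xv 7 = 5 from by decide, show xv 8 = -2 from by decide, show xv 9 = -2 from by decide, show xv 10 = -5 from by decide, show xv 11 = 5 from by decide, show yv 5 = 15 from by decide]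
  have h6 : Matrix.mulVec (G.lapMatrix ℝ) xr 6 = ((yv 6 : ℚ) : ℝ) := by
    rw [SimpleGraph.lapMatrix_mulVec_apply,
      show G.neighborFinset 6 = ({4,9,10} : Finset (Fin 12)) from by decide,
      show G.degree 6 = 3 from by decide]
    simp [xr, Finset.sum_insert, Finset.mem_insert, Finset.sum_singleton, Finset.mem_singleton]
    norm_num [show xv 0 = 2 from by decide, show xv 1 = 5 from by decide, show xv 2 = -5 from by decide, show xv 3 = -5 from by decide, show xv 4 = -2 from by decide, show xv 5 = 2 from by decide, show xv 6 = 2 from by decide, show xv 7 = 5 from by decide, show xv 8 = -2 from by decide, show xv 9 = -2 from by decide, show xv 10 = -5 from by decide, show xv 11 = 5 from by decide, show yv 6 = 15 from by decide]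
  have h7 : Matrix.mulVec (G.lapMatrix ℝ) xr 7 = ((yv 7 : ℚ) : ℝ) := by
    rw [SimpleGraph.lapMatrix_mulVec_apply,
      show G.neighborFinset 7 = ({2,3,4,10} : Finset (Fin 12)) from by decide,
      show G.degree 7 = 4 from by decide]
    simp [xr, Finset.sum_insert, Finset.mem_insert, Finset.sum_singleton, Finset.mem_singleton]
    norm_num [show xv 0 = 2 from by decide, show xv 1 = 5 from by decide, show xv 2 = -5 from by decide, show xv 3 = -5 from by decide, show xv 4 = -2 from by decide, show xv 5 = 2 from by decide, show xv 6 = 2 from by decide, show xv 7 = 5 from by decide, show xv 8 = -2 from by decide, show xv 9 = -2 from by decide, show xv 10 = -5 from by decide, show xv 11 = 5 from by decide, show yv 7 = 37 from by decide]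
  have h8 : Matrix.mulVec (G.lapMatrix ℝ) xr 8 = ((yv 8 : ℚ) : ℝ) := by
    rw [SimpleGraph.lapMatrix_mulVec_apply,
      show G.neighborFinset 8 = ({0,1,5} : Finset (Fin 12)) from by decide,
      show G.degree 8 = 3 from by decide]
    simp [xr, Finset.sum_insert, Finset.mem_insert, Finset.sum_singleton, Finset.mem_singleton]
    norm_num [show xv 0 = 2 from by decide, show xv 1 = 5 from by decide, show xv 2 = -5 from by decide, show xv 3 = -5 from by decide, show xv 4 = -2 from by decide, show xv 5 = 2 from by decide, show xv 6 = 2 from by decide, show xv 7 = 5 from by decide, show xv 8 = -2 from by decide, show xv 9 = -2 from by decide, show xv 10 = -5 from by decide, show xv 11 = 5 from by decide, show yv 8 = -15 from by decide]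
  have h9 : Matrix.mulVec (G.lapMatrix ℝ) xr 9 = ((yv 9 : ℚ) : ℝ) := by
    rw [SimpleGraph.lapMatrix_mulVec_apply,
      show G.neighborFinset 9 = ({5,6,11} : Finset (Fin 12)) from by decide,
      show G.degree 9 = 3 from by decide]
    simp [xr, Finset.sum_insert, Finset.mem_insert, Finset.sum_singleton, Finset.mem_singleton]
    norm_num [show xv 0 = 2 from by decide, show xv 1 = 5 from by decide, show xv 2 = -5 from by decide, show xv 3 = -5 from by decide, show xv 4 = -2 from by decide, show xv 5 = 2 from by decide, show xv 6 = 2 from by decide, show xv 7 = 5 from by decide, show xv 8 = -2 from by decide, show xv 9 = -2 from by decide, show xv 10 = -5 from by decide, show xv 11 = 5 from by decide, show yv 9 = -15 from by decide]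
  have h10 : Matrix.mulVec (G.lapMatrix ℝ) xr 10 = ((yv 10 : ℚ) : ℝ) := by
    rw [SimpleGraph.lapMatrix_mulVec_apply,
      show G.neighborFinset 10 = ({1,6,7,11} : Finset (Fin 12)) from by decide,
      show G.degree 10 = 4 from by decide]
    simp [xr, Finset.sum_insert, Finset.mem_insert, Finset.sum_singleton, Finset.mem_singleton]
    norm_num [show xv 0 = 2 from by decide, show xv 1 = 5 from by decide, show xv 2 = -5 from by decide, show xv 3 = -5 from by decide, show xv 4 = -2 from by decide, show xv 5 = 2 from by decide, show xv 6 = 2 from by decide, show xv 7 = 5 from by decide, show xv 8 = -2 from by decide, show xv 9 = -2 from by decide, show xv 10 = -5 from by decide, show xv 11 = 5 from by decide, show yv 10 = -37 from by decide]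
  have h11 : Matrix.mulVec (G.lapMatrix ℝ) xr 11 = ((yv 11 : ℚ) : ℝ) := by
    rw [SimpleGraph.lapMatrix_mulVec_apply,
      show G.neighborFinset 11 = ({2,3,9,10} : Finset (Fin 12)) from by decide,
      show G.degree 11 = 4 from by decide]
    simp [xr, Finset.sum_insert, Finset.mem_insert, Finset.sum_singleton, Finset.mem_singleton]
    norm_num [show xv 0 = 2 from by decide, show xv 1 = 5 from by decide, show xv 2 = -5 from by decide, show xv 3 = -5 from by decide, show xv 4 = -2 from by decide, show xv 5 = 2 from by decide, show xv 6 = 2 from by decide, show xv 7 = 5 from by decide, show xv 8 = -2 from by decide, show xv 9 = -2 from by decide, show xv 10 = -5 from by decide, show xv 11 = 5 from by decide, show yv 11 = 37 from by decide]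
  funext v
  fin_cases v
  · exact h0
  · exact h1
  · exact h2
  · exact h3
  · exact h4
  · exact h5
  · exact h6
  · exact h7
  · exact h8
  · exact h9
  · exact h10
  · exact h11

lemma lap_herm : (G.lapMatrix ℝ).IsHermitian := by
  rw [Matrix.IsHermitian, Matrix.conjTranspose_eq_transpose_of_trivial]
  exact G.isSymm_lapMatrix (R := ℝ)

lemma rayleigh (μ : ℝ) (hmax : ∀ ν ∈ spectrum ℝ (G.lapMatrix ℝ), ν ≤ μ)
    (y : Fin 12 → ℝ) :
    dotProduct y (Matrix.mulVec (G.lapMatrix ℝ) y) ≤ μ * dotProduct y y := by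
  set L := G.lapMatrix ℝ with hLdef
  have h1 : (μ • (1 : Matrix (Fin 12) (Fin 12) ℝ)).IsHermitian := by
    simp [Matrix.IsHermitian]
  have hMherm : (μ • (1 : Matrix (Fin 12) (Fin 12) ℝ) - L).IsHermitian := h1.sub lap_herm
  have hspec : spectrum ℝ (μ • (1 : Matrix (Fin 12) (Fin 12) ℝ) - L)
      = ({μ} : Set ℝ) - spectrum ℝ L := by
    rw [spectrum.singleton_sub_eq, Algebra.algebraMap_eq_smul_one]
  have hpsd : (μ • (1 : Matrix (Fin 12) (Fin 12) ℝ) - L).PosSemidef := by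
    apply (Matrix.IsHermitian.posSemidef_iff_eigenvalues_nonneg hMherm).mpr
    intro i
    have hm := hMherm.eigenvalues_mem_spectrum_real i
    rw [hspec, Set.mem_sub] at hm
    obtain ⟨a, ha, b, hb, hab⟩ := hm
    rw [Set.mem_singleton_iff] at ha
    subst ha
    have := hmax b hb
    simp only [Pi.zero_apply]
    linarith
  have h0 := hpsd.dotProduct_mulVec_nonneg y
  have hstar : star y = y := by funext i; simp
  rw [hstar, Matrix.sub_mulVec, dotProduct_sub, Matrix.smul_mulVec,
    Matrix.one_mulVec, dotProduct_smul, smul_eq_mul] at h0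
  linarith

theorem laplacian_spectral_radius_exceeds_bound (μ : ℝ)
    (hmem : μ ∈ spectrum ℝ (G.lapMatrix ℝ))
    (hmax : ∀ ν ∈ spectrum ℝ (G.lapMatrix ℝ), ν ≤ μ) :
    Finset.univ.sup' Finset.univ_nonempty (fun v => 2 * m v ^ 2 / d v) < μ := by
  have hray := rayleigh μ hmax xr
  rw [lap_mulVec_xr] at hray
  have hdot : dotProduct xr (fun v => ((yv v : ℚ) : ℝ)) = 1290 := by
    simp only [dotProduct, xr, xv, yv, Fin.sum_univ_succ, Fin.sum_univ_zero,
      Matrix.cons_val_zero, Matrix.cons_val_succ]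
    norm_num
  have hnorm : dotProduct xr xr = 174 := by
    simp only [dotProduct, xr, xv, Fin.sum_univ_succ, Fin.sum_univ_zero,
      Matrix.cons_val_zero, Matrix.cons_val_succ]
    norm_num
  rw [hdot, hnorm] at hray
  have hmu : (215 : ℝ) / 29 ≤ μ := by linarith
  have g0 : 2 * m 0 ^ 2 / d 0 < μ := by
    rw [m, d, show G.neighborFinset 0 = ({3,4,8} : Finset (Fin 12)) from by decide,
      show G.degree 0 = 3 from by decide]
    simp [Finset.sum_insert, Finset.mem_insert, Finset.sum_singleton, Finset.mem_singleton]
    norm_num [show G.degree 3 = 4 from by decide, show G.degree 4 = 3 from by decide, show G.degree 8 = 3 from by decide]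
    linarith
  have g1 : 2 * m 1 ^ 2 / d 1 < μ := by
    rw [m, d, show G.neighborFinset 1 = ({2,3,8,10} : Finset (Fin 12)) from by decide,
      show G.degree 1 = 4 from by decide]
    simp [Finset.sum_insert, Finset.mem_insert, Finset.sum_singleton, Finset.mem_singleton]
    norm_num [show G.degree 2 = 4 from by decide, show G.degree 3 = 4 from by decide, show G.degree 8 = 3 from by decide, show G.degree 10 = 4 from by decide]
    linarith
  have g2 : 2 * m 2 ^ 2 / d 2 < μ := by
    rw [m, d, show G.neighborFinset 2 = ({1,5,7,11} : Finset (Fin 12)) from by decide,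
      show G.degree 2 = 4 from by decide]
    simp [Finset.sum_insert, Finset.mem_insert, Finset.sum_singleton, Finset.mem_singleton]
    norm_num [show G.degree 1 = 4 from by decide, show G.degree 5 = 3 from by decide, show G.degree 7 = 4 from by decide, show G.degree 11 = 4 from by decide]
    linarith
  have g3 : 2 * m 3 ^ 2 / d 3 < μ := by
    rw [m, d, show G.neighborFinset 3 = ({0,1,7,11} : Finset (Fin 12)) from by decide,
      show G.degree 3 = 4 from by decide]
    simp [Finset.sum_insert, Finset.mem_insert, Finset.sum_singleton, Finset.mem_singleton]
    norm_num [show G.degree 0 = 3 from by decide, show G.degree 1 = 4 from by decide, show G.degree 7 = 4 from by decide, show G.degree 11 = 4 from by decide]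
    linarith
  have g4 : 2 * m 4 ^ 2 / d 4 < μ := by
    rw [m, d, show G.neighborFinset 4 = ({0,6,7} : Finset (Fin 12)) from by decide,
      show G.degree 4 = 3 from by decide]
    simp [Finset.sum_insert, Finset.mem_insert, Finset.sum_singleton, Finset.mem_singleton]
    norm_num [show G.degree 0 = 3 from by decide, show G.degree 6 = 3 from by decide, show G.degree 7 = 4 from by decide]
    linarith
  have g5 : 2 * m 5 ^ 2 / d 5 < μ := by
    rw [m, d, show G.neighborFinset 5 = ({2,8,9} : Finset (Fin 12)) from by decide,
      show G.degree 5 = 3 from by decide]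
    simp [Finset.sum_insert, Finset.mem_insert, Finset.sum_singleton, Finset.mem_singleton]
    norm_num [show G.degree 2 = 4 from by decide, show G.degree 8 = 3 from by decide, show G.degree 9 = 3 from by decide]
    linarith
  have g6 : 2 * m 6 ^ 2 / d 6 < μ := by
    rw [m, d, show G.neighborFinset 6 = ({4,9,10} : Finset (Fin 12)) from by decide,
      show G.degree 6 = 3 from by decide]
    simp [Finset.sum_insert, Finset.mem_insert, Finset.sum_singleton, Finset.mem_singleton]
    norm_num [show G.degree 4 = 3 from by decide, show G.degree 9 = 3 from by decide, show G.degree 10 = 4 from by decide]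
    linarith
  have g7 : 2 * m 7 ^ 2 / d 7 < μ := by
    rw [m, d, show G.neighborFinset 7 = ({2,3,4,10} : Finset (Fin 12)) from by decide,
      show G.degree 7 = 4 from by decide]
    simp [Finset.sum_insert, Finset.mem_insert, Finset.sum_singleton, Finset.mem_singleton]
    norm_num [show G.degree 2 = 4 from by decide, show G.degree 3 = 4 from by decide, show G.degree 4 = 3 from by decide, show G.degree 10 = 4 from by decide]
    linarith
  have g8 : 2 * m 8 ^ 2 / d 8 < μ := by
    rw [m, d, show G.neighborFinset 8 = ({0,1,5} : Finset (Fin 12)) from by decide,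
      show G.degree 8 = 3 from by decide]
    simp [Finset.sum_insert, Finset.mem_insert, Finset.sum_singleton, Finset.mem_singleton]
    norm_num [show G.degree 0 = 3 from by decide, show G.degree 1 = 4 from by decide, show G.degree 5 = 3 from by decide]
    linarith
  have g9 : 2 * m 9 ^ 2 / d 9 < μ := by
    rw [m, d, show G.neighborFinset 9 = ({5,6,11} : Finset (Fin 12)) from by decide,
      show G.degree 9 = 3 from by decide]
    simp [Finset.sum_insert, Finset.mem_insert, Finset.sum_singleton, Finset.mem_singleton]
    norm_num [show G.degree 5 = 3 from by decide, show G.degree 6 = 3 from by decide, show G.degree 11 = 4 from by decide]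
    linarith
  have g10 : 2 * m 10 ^ 2 / d 10 < μ := by
    rw [m, d, show G.neighborFinset 10 = ({1,6,7,11} : Finset (Fin 12)) from by decide,
      show G.degree 10 = 4 from by decide]
    simp [Finset.sum_insert, Finset.mem_insert, Finset.sum_singleton, Finset.mem_singleton]
    norm_num [show G.degree 1 = 4 from by decide, show G.degree 6 = 3 from by decide, show G.degree 7 = 4 from by decide, show G.degree 11 = 4 from by decide]
    linarith
  have g11 : 2 * m 11 ^ 2 / d 11 < μ := by
    rw [m, d, show G.neighborFinset 11 = ({2,3,9,10} : Finset (Fin 12)) from by decide,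
      show G.degree 11 = 4 from by decide]
    simp [Finset.sum_insert, Finset.mem_insert, Finset.sum_singleton, Finset.mem_singleton]
    norm_num [show G.degree 2 = 4 from by decide, show G.degree 3 = 4 from by decide, show G.degree 9 = 3 from by decide, show G.degree 10 = 4 from by decide]
    linarith
  rw [Finset.sup'_lt_iff]
  intro v _
  fin_cases v
  · exact g0
  · exact g1
  · exact g2
  · exact g3
  · exact g4
  · exact g5
  · exact g6
  · exact g7
  · exact g8
  · exact g9
  · exact g10
  · exact g11
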